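/- arXiv:2003.04818 — 4 statements merged into one kernel-verified Lean document; each statement's English description precedes it below -/
import Mathlib

section
/- Let $I, I' \subseteq \mathbb{R}$ be bounded open intervals and let $f_k : I \to I'$ ($k \in \mathbb{N}$) be a sequence of decreasing (antitone) functions. Set $f := \limsup_{k\to\infty} f_k$ (pointwise). If $\lim_{k\to\infty} \int_I f_k \, d\lambda = \int_I f \, d\lambda$ (with respect to Lebesgue measure), then at every point $x \in I$ at which $f$ is right-continuous, the limit $\lim_{k\to\infty} f_k(x)$ exists and equals $f(x)$. In particular, $f_k \to f$ almost everywhere on $I$. -/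
/-!
Since the `f k` are bounded above and `limsup f k = F`, the positive parts of `f k - F` tend to
`0` pointwise, hence in `L¹` by dominated convergence; together with `∫ (F - f k) → 0` this
makes `f k → F` in `L¹(I)`. If `F` is right-continuous at `x` and `f k x < c < F x`, then
monotonicity of `f k` keeps `F - f k` above a positive constant on some `[x, u)`, which `L¹`
convergence forbids for all but finitely many `k`; the other inequality is the `limsup`. An
antitone function is continuous off a countable set, hence almost everywhere.
-/

open MeasureTheory Filter Topology

theorem mapsTo_limsup_Icc {α ι : Type*} {l : Filter ι} [l.NeBot] {f : ι → α → ℝ}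
    {s : Set α} {c C : ℝ} (hf : ∀ i, Set.MapsTo (f i) s (Set.Icc c C)) :
    Set.MapsTo (fun x => limsup (fun i => f i x) l) s (Set.Icc c C) := fun _ hx =>
  ⟨le_limsup_of_frequently_le (Eventually.of_forall fun i => (hf i hx).1).frequently
      (isBoundedUnder_of ⟨C, fun i => (hf i hx).2⟩),
    limsup_le_of_le (isBoundedUnder_of ⟨c, fun i => (hf i hx).1⟩).isCoboundedUnder_le
      (.of_forall fun i => (hf i hx).2)⟩

theorem antitoneOn_limsup {α ι : Type*} [Preorder α] {l : Filter ι} [l.NeBot]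
    {f : ι → α → ℝ} {s : Set α} {c C : ℝ} (hanti : ∀ i, AntitoneOn (f i) s)
    (hf : ∀ i, Set.MapsTo (f i) s (Set.Icc c C)) :
    AntitoneOn (fun x => limsup (fun i => f i x) l) s := fun _ hx _ hy hxy =>
  limsup_le_limsup (.of_forall fun i => hanti i hx hy hxy)
    (isBoundedUnder_of ⟨c, fun i => (hf i hy).1⟩).isCoboundedUnder_le
    (isBoundedUnder_of ⟨C, fun i => (hf i hx).2⟩)

theorem AntitoneOn.integrableOn_of_mapsTo_Icc {μ : Measure ℝ} {g : ℝ → ℝ} {s : Set ℝ}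
    {c C : ℝ} (hs : MeasurableSet s) (hμs : μ s ≠ ⊤) (hg : AntitoneOn g s)
    (hgs : Set.MapsTo g s (Set.Icc c C)) : IntegrableOn g s μ :=
  IntegrableOn.of_bound hμs.lt_top
    (aemeasurable_restrict_of_antitoneOn hs hg).aestronglyMeasurable (max |c| |C|)
    ((ae_restrict_iff' hs).2 (.of_forall fun _ hx =>
      abs_le_max_abs_abs (hgs hx).1 (hgs hx).2))

theorem AntitoneOn.ae_continuousAt {μ : Measure ℝ} [NullSingletonClass μ] {g : ℝ → ℝ}
    {s : Set ℝ} (hs : IsOpen s) (hg : AntitoneOn g s) :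
    ∀ᵐ x ∂μ.restrict s, ContinuousAt g x := by
  filter_upwards [ae_restrict_mem hs.measurableSet,
    ae_restrict_of_ae (hg.countable_not_continuousWithinAt.ae_notMem μ)] with x hx hcont
  simp only [not_and, not_not] at hcont
  exact (hcont hx).continuousAt (hs.mem_nhds hx)

theorem tendsto_integral_abs_sub_of_limsup_le {α : Type*} [MeasurableSpace α] {μ : Measure α}
    [IsFiniteMeasure μ] {f : ℕ → α → ℝ} {F : α → ℝ} {C : ℝ}
    (hf : ∀ n, Integrable (f n) μ) (hF : Integrable F μ)
    (hC : ∀ᵐ x ∂μ, ∀ n, f n x ≤ C)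
    (hlimsup : ∀ᵐ x ∂μ, limsup (fun n => f n x) atTop ≤ F x)
    (hint : Tendsto (fun n => ∫ x, f n x ∂μ) atTop (𝓝 (∫ x, F x ∂μ))) :
    Tendsto (fun n => ∫ x, |F x - f n x| ∂μ) atTop (𝓝 0) := by
  have hpart : ∀ n, Integrable (fun x => max (f n x - F x) 0) μ := fun n =>
    ((hf n).sub hF).pos_part
  have hpos : Tendsto (fun n => ∫ x, max (f n x - F x) 0 ∂μ) atTop (𝓝 0) := by
    simpa using tendsto_integral_of_dominated_convergence (f := fun _ => (0 : ℝ))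
      (fun x => |C| + |F x|) (fun n => (hpart n).aestronglyMeasurable)
      ((integrable_const _).add hF.abs) (fun n => by
        filter_upwards [hC] with x hx
        rw [Real.norm_of_nonneg (le_max_right _ _)]
        exact max_le (by linarith [hx n, le_abs_self C, neg_abs_le (F x)]) (by positivity))
      (by
        filter_upwards [hC, hlimsup] with x hx hxF
        refine tendsto_order.2 ⟨fun c hc => .of_forall fun n => hc.trans_le (le_max_right _ _),
          fun c hc => ?_⟩
        filter_upwards [eventually_lt_of_limsup_lt (b := F x + c) (by linarith)
          (isBoundedUnder_of ⟨C, hx⟩)] with n hn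
        exact max_lt (by linarith) hc)
  have hsub : Tendsto (fun n => ∫ x, (F x - f n x) ∂μ) atTop (𝓝 0) := by
    simpa [integral_sub hF (hf _)] using hint.const_sub (∫ x, F x ∂μ)
  have habs : ∀ n, ∫ x, |F x - f n x| ∂μ
      = ∫ x, (F x - f n x) ∂μ + 2 * ∫ x, max (f n x - F x) 0 ∂μ := fun n => by
    have hdiff : Integrable (fun x => F x - f n x) μ := hF.sub (hf n)
    rw [← integral_const_mul, ← integral_add hdiff ((hpart n).const_mul 2)]
    congr 1 with x
    rcases le_total (f n x) (F x) with h | h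
    · rw [abs_of_nonneg (sub_nonneg.2 h), max_eq_right (sub_nonpos.2 h)]; ring
    · rw [abs_of_nonpos (sub_nonpos.2 h), max_eq_left (sub_nonneg.2 h)]; ring
  simpa [habs] using hsub.add (hpos.const_mul 2)

theorem eventually_lt_of_tendsto_setIntegral_abs_sub {ι : Type*} {l : Filter ι}
    {f : ι → ℝ → ℝ} {F : ℝ → ℝ} {s : Set ℝ} {x c : ℝ} (hs : s ∈ 𝓝[≥] x)
    (hanti : ∀ i, AntitoneOn (f i) s) (hFx : ContinuousWithinAt F (Set.Ici x) x) (hc : c < F x)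
    (hint : ∀ i, IntegrableOn (fun y => F y - f i y) s)
    (hL1 : Tendsto (fun i => ∫ y in s, |F y - f i y|) l (𝓝 0)) :
    ∀ᶠ i in l, c < f i x := by
  obtain ⟨c', hcc', hc'F⟩ := exists_between hc
  obtain ⟨u, hxu, hIco⟩ : ∃ u ∈ Set.Ioi x, Set.Ico x u ⊆ s ∩ {y | c' < F y} :=
    mem_nhdsGE_iff_exists_Ico_subset.1 (inter_mem hs (hFx (Ioi_mem_nhds hc'F)))
  have hxs : x ∈ s := (hIco ⟨le_rfl, hxu⟩).1
  have hlen : 0 < u - x := sub_pos.2 hxu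
  -- on `[x, u)`, `F > c'` while `f i ≤ f i x`
  have hbound : ∀ i, (c' - f i x) * (u - x) ≤ ∫ y in s, |F y - f i y| := fun i => by
    calc (c' - f i x) * (u - x) = (c' - f i x) * volume.real (Set.Ico x u) := by
          simp [Measure.real, hlen.le]
      _ ≤ ∫ y in Set.Ico x u, |F y - f i y| := by
          refine setIntegral_ge_of_const_le_real measurableSet_Ico measure_Ico_lt_top.ne
            (fun y hy => ?_) (IntegrableOn.mono_set (hint i).abs fun y hy => (hIco hy).1)
          have := hanti i hxs (hIco hy).1 hy.1
          have : c' < F y := (hIco hy).2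
          linarith [le_abs_self (F y - f i y)]
      _ ≤ ∫ y in s, |F y - f i y| :=
          setIntegral_mono_set (hint i).abs (.of_forall fun _ => abs_nonneg _)
            (.of_forall fun y hy => (hIco hy).1)
  filter_upwards [hL1.eventually (gt_mem_nhds (mul_pos (sub_pos.2 hcc') hlen))] with i hi
  nlinarith [hbound i]

theorem stmt0_general
    (a b a' b' : ℝ)
    (f : ℕ → ℝ → ℝ)
    (hmap : ∀ k, ∀ x ∈ Set.Ioo a b, f k x ∈ Set.Ioo a' b')
    (hanti : ∀ k, ∀ x ∈ Set.Ioo a b, ∀ y ∈ Set.Ioo a b, x ≤ y → f k y ≤ f k x)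
    (F : ℝ → ℝ) (hF : ∀ x, F x = Filter.limsup (fun k => f k x) atTop)
    (hint : Tendsto (fun k => ∫ x in Set.Ioo a b, f k x) atTop
      (𝓝 (∫ x in Set.Ioo a b, F x))) :
    (∀ x ∈ Set.Ioo a b,
        ContinuousWithinAt F (Set.Ici x) x →
        Tendsto (fun k => f k x) atTop (𝓝 (F x))) ∧
    (∀ᵐ x ∂(volume.restrict (Set.Ioo a b)),
        Tendsto (fun k => f k x) atTop (𝓝 (F x))) := by
  have hfI : ∀ k, Set.MapsTo (f k) (Set.Ioo a b) (Set.Icc a' b') := fun k x hx =>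
    Set.Ioo_subset_Icc_self (hmap k x hx)
  have hFeq : (fun x => limsup (fun k => f k x) atTop) = F := (funext hF).symm
  have hFanti : AntitoneOn F (Set.Ioo a b) := hFeq ▸ antitoneOn_limsup hanti hfI
  have hvol : volume (Set.Ioo a b) ≠ ⊤ := measure_Ioo_lt_top.ne
  have hfint : ∀ k, IntegrableOn (f k) (Set.Ioo a b) := fun k =>
    AntitoneOn.integrableOn_of_mapsTo_Icc measurableSet_Ioo hvol (hanti k) (hfI k)
  have hFint : IntegrableOn F (Set.Ioo a b) :=
    hFanti.integrableOn_of_mapsTo_Icc measurableSet_Ioo hvol (hFeq ▸ mapsTo_limsup_Icc hfI)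
  have hL1 := tendsto_integral_abs_sub_of_limsup_le hfint hFint
    (ae_restrict_of_forall_mem measurableSet_Ioo fun x hx k => (hfI k hx).2)
    (.of_forall fun x => (hF x).ge) hint
  have hpt : ∀ x ∈ Set.Ioo a b, ContinuousWithinAt F (Set.Ici x) x →
      Tendsto (fun k => f k x) atTop (𝓝 (F x)) := fun x hx hFx =>
    tendsto_order.2
      ⟨fun c hc => eventually_lt_of_tendsto_setIntegral_abs_sub
        (nhdsWithin_le_nhds (isOpen_Ioo.mem_nhds hx)) hanti hFx hc
        (fun k => hFint.sub (hfint k)) hL1,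
      fun c hc => eventually_lt_of_limsup_lt ((hF x).symm.trans_lt hc)
        (isBoundedUnder_of ⟨b', fun k => (hfI k hx).2⟩)⟩
  refine ⟨hpt, ?_⟩
  filter_upwards [hFanti.ae_continuousAt isOpen_Ioo, ae_restrict_mem measurableSet_Ioo]
    with x hFx hx
  exact hpt x hx hFx.continuousWithinAt

/-- Lemma 5.2 of the paper: if a sequence of decreasing functions `f k : I → I'` between
bounded open intervals satisfies convergence of integrals to the integral of the pointwise
limsup `F`, then `f k → F` at every right-continuity point of `F`, hence a.e. -/
theorem stmt0
    (a b a' b' : ℝ) (hab : a < b)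
    (f : ℕ → ℝ → ℝ)
    (hmap : ∀ k, ∀ x ∈ Set.Ioo a b, f k x ∈ Set.Ioo a' b')
    (hanti : ∀ k, ∀ x ∈ Set.Ioo a b, ∀ y ∈ Set.Ioo a b, x ≤ y → f k y ≤ f k x)
    (F : ℝ → ℝ) (hF : ∀ x, F x = Filter.limsup (fun k => f k x) atTop)
    (hint : Tendsto (fun k => ∫ x in Set.Ioo a b, f k x) atTop
      (𝓝 (∫ x in Set.Ioo a b, F x))) :
    (∀ x ∈ Set.Ioo a b,
        ContinuousWithinAt F (Set.Ici x) x →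
        Tendsto (fun k => f k x) atTop (𝓝 (F x))) ∧
    (∀ᵐ x ∂(volume.restrict (Set.Ioo a b)),
        Tendsto (fun k => f k x) atTop (𝓝 (F x))) :=
  stmt0_general a b a' b' f hmap hanti F hF hint
end

section
/- Let $I \subseteq \mathbb{R}$ be an open interval and let $f_j, f : I \to \mathbb{R}$ be convex functions such that $f_j \to f$ pointwise on $I$. Then for every $x \in I$: $f'_-(x) \le \liminf_{j\to\infty} (f_j)'_-(x) \le \limsup_{j\to\infty} (f_j)'_+(x) \le f'_+(x)$, where $f'_-$ and $f'_+$ denote the left and right derivatives. -/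
open Filter Topology

/-- The left derivative of a convex function on `(a,b)` at `x`, as the supremum of
difference quotients from the left. -/
noncomputable def leftSlopeSup (f : ℝ → ℝ) (a x : ℝ) : ℝ :=
  sSup ((fun y => (f x - f y) / (x - y)) '' Set.Ioo a x)

/-- The right derivative of a convex function on `(a,b)` at `x`, as the infimum of
difference quotients from the right. -/
noncomputable def rightSlopeInf (f : ℝ → ℝ) (b x : ℝ) : ℝ :=
  sInf ((fun y => (f y - f x) / (y - x)) '' Set.Ioo x b)

section aux

variable {a b x : ℝ}

/-- Any left slope is at most any right slope, for a convex function. -/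
lemma left_slope_le_right_slope {f : ℝ → ℝ} (hf : ConvexOn ℝ (Set.Ioo a b) f)
    (hx : x ∈ Set.Ioo a b) {y z : ℝ} (hy : y ∈ Set.Ioo a x) (hz : z ∈ Set.Ioo x b) :
    (f x - f y) / (x - y) ≤ (f z - f x) / (z - x) :=
  hf.slope_mono_adjacent ⟨hy.1, hy.2.trans hx.2⟩ ⟨hx.1.trans hz.1, hz.2⟩ hy.2 hz.1

lemma left_le_leftSlopeSup {f : ℝ → ℝ} (hf : ConvexOn ℝ (Set.Ioo a b) f)
    (hx : x ∈ Set.Ioo a b) {y : ℝ} (hy : y ∈ Set.Ioo a x) :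
    (f x - f y) / (x - y) ≤ leftSlopeSup f a x := by
  refine le_csSup ?_ ⟨y, hy, rfl⟩
  refine ⟨(f ((x + b) / 2) - f x) / ((x + b) / 2 - x), ?_⟩
  rintro _ ⟨y', hy', rfl⟩
  exact left_slope_le_right_slope hf hx hy' (by constructor <;> [linarith [hx.2]; linarith [hx.2]])

lemma rightSlopeInf_le_right {f : ℝ → ℝ} (hf : ConvexOn ℝ (Set.Ioo a b) f)
    (hx : x ∈ Set.Ioo a b) {z : ℝ} (hz : z ∈ Set.Ioo x b) :
    rightSlopeInf f b x ≤ (f z - f x) / (z - x) := by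
  refine csInf_le ?_ ⟨z, hz, rfl⟩
  refine ⟨(f x - f ((a + x) / 2)) / (x - (a + x) / 2), ?_⟩
  rintro _ ⟨z', hz', rfl⟩
  exact left_slope_le_right_slope hf hx (by constructor <;> [linarith [hx.1]; linarith [hx.1]]) hz'

lemma leftSlopeSup_le_rightSlopeInf {f : ℝ → ℝ} (hf : ConvexOn ℝ (Set.Ioo a b) f)
    (hx : x ∈ Set.Ioo a b) : leftSlopeSup f a x ≤ rightSlopeInf f b x := by
  have hy : (a + x) / 2 ∈ Set.Ioo a x := ⟨by linarith [hx.1], by linarith [hx.1]⟩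
  refine csSup_le ⟨_, ⟨(a + x) / 2, hy, rfl⟩⟩ ?_
  rintro _ ⟨y', hy', rfl⟩
  refine le_csInf ⟨_, ⟨(x + b) / 2, ⟨by linarith [hx.2], by linarith [hx.2]⟩, rfl⟩⟩ ?_
  rintro _ ⟨z', hz', rfl⟩
  exact left_slope_le_right_slope hf hx hy' hz'

end aux

/-- Lemma 4.8 of the paper: pointwise convergence of convex functions on an open interval
gives `f'_-(x) ≤ liminf (f_j)'_-(x) ≤ limsup (f_j)'_+(x) ≤ f'_+(x)`. -/
theorem stmt1 (a b : ℝ) (hab : a < b)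
    (f : ℕ → ℝ → ℝ) (g : ℝ → ℝ)
    (hconv : ∀ j, ConvexOn ℝ (Set.Ioo a b) (f j))
    (hg : ConvexOn ℝ (Set.Ioo a b) g)
    (hlim : ∀ x ∈ Set.Ioo a b, Tendsto (fun j => f j x) atTop (𝓝 (g x))) :
    ∀ x ∈ Set.Ioo a b,
      leftSlopeSup g a x ≤ liminf (fun j => leftSlopeSup (f j) a x) atTop ∧
      liminf (fun j => leftSlopeSup (f j) a x) atTop
        ≤ limsup (fun j => rightSlopeInf (f j) b x) atTop ∧
      limsup (fun j => rightSlopeInf (f j) b x) atTop ≤ rightSlopeInf g b x := by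
  intro x hx
  -- fixed reference points
  set y₀ : ℝ := (a + x) / 2 with hy₀def
  set z₀ : ℝ := (x + b) / 2 with hz₀def
  have hy₀ : y₀ ∈ Set.Ioo a x := ⟨by simp only [hy₀def]; linarith [hx.1], by simp only [hy₀def]; linarith [hx.1]⟩
  have hz₀ : z₀ ∈ Set.Ioo x b := ⟨by simp only [hz₀def]; linarith [hx.2], by simp only [hz₀def]; linarith [hx.2]⟩
  have hxmem := hx
  have memIoo : ∀ y ∈ Set.Ioo a x, y ∈ Set.Ioo a b := fun y hy => ⟨hy.1, hy.2.trans hx.2⟩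
  have memIoo' : ∀ z ∈ Set.Ioo x b, z ∈ Set.Ioo a b := fun z hz => ⟨hx.1.trans hz.1, hz.2⟩
  -- slopes at fixed points converge
  have hslopeL : ∀ y ∈ Set.Ioo a x,
      Tendsto (fun j => (f j x - f j y) / (x - y)) atTop (𝓝 ((g x - g y) / (x - y))) :=
    fun y hy => ((hlim x hx).sub (hlim y (memIoo y hy))).div_const _
  have hslopeR : ∀ z ∈ Set.Ioo x b,
      Tendsto (fun j => (f j z - f j x) / (z - x)) atTop (𝓝 ((g z - g x) / (z - x))) :=
    fun z hz => ((hlim z (memIoo' z hz)).sub (hlim x hx)).div_const _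
  -- boundedness of the sequences
  have hL_lb : ∀ j, (f j x - f j y₀) / (x - y₀) ≤ leftSlopeSup (f j) a x :=
    fun j => left_le_leftSlopeSup (hconv j) hx hy₀
  have hR_ub : ∀ j, rightSlopeInf (f j) b x ≤ (f j z₀ - f j x) / (z₀ - x) :=
    fun j => rightSlopeInf_le_right (hconv j) hx hz₀
  have hLR : ∀ j, leftSlopeSup (f j) a x ≤ rightSlopeInf (f j) b x :=
    fun j => leftSlopeSup_le_rightSlopeInf (hconv j) hx
  have hbdd_ylow : IsBoundedUnder (· ≥ ·) atTop (fun j => (f j x - f j y₀) / (x - y₀)) :=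
    (hslopeL y₀ hy₀).isBoundedUnder_ge
  have hbdd_zup : IsBoundedUnder (· ≤ ·) atTop (fun j => (f j z₀ - f j x) / (z₀ - x)) :=
    (hslopeR z₀ hz₀).isBoundedUnder_le
  have hL_bdd_ge : IsBoundedUnder (· ≥ ·) atTop (fun j => leftSlopeSup (f j) a x) := by
    obtain ⟨c, hc⟩ := hbdd_ylow
    exact ⟨c, eventually_map.mpr <| (eventually_map.mp hc).mono fun j hj => hj.trans (hL_lb j)⟩
  have hL_bdd_le : IsBoundedUnder (· ≤ ·) atTop (fun j => leftSlopeSup (f j) a x) := by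
    obtain ⟨c, hc⟩ := hbdd_zup
    exact ⟨c, eventually_map.mpr <| (eventually_map.mp hc).mono fun j hj =>
      ((hLR j).trans (hR_ub j)).trans hj⟩
  have hR_bdd_le : IsBoundedUnder (· ≤ ·) atTop (fun j => rightSlopeInf (f j) b x) := by
    obtain ⟨c, hc⟩ := hbdd_zup
    exact ⟨c, eventually_map.mpr <| (eventually_map.mp hc).mono fun j hj => (hR_ub j).trans hj⟩
  have hR_bdd_ge : IsBoundedUnder (· ≥ ·) atTop (fun j => rightSlopeInf (f j) b x) := by
    obtain ⟨c, hc⟩ := hbdd_ylow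
    exact ⟨c, eventually_map.mpr <| (eventually_map.mp hc).mono fun j hj =>
      hj.trans ((hL_lb j).trans (hLR j))⟩
  refine ⟨?_, ?_, ?_⟩
  · -- leftSlopeSup g ≤ liminf
    refine csSup_le ⟨_, ⟨y₀, hy₀, rfl⟩⟩ ?_
    rintro _ ⟨y, hy, rfl⟩
    have h1 : ∀ j, (f j x - f j y) / (x - y) ≤ leftSlopeSup (f j) a x :=
      fun j => left_le_leftSlopeSup (hconv j) hx hy
    have h2 : liminf (fun j => (f j x - f j y) / (x - y)) atTop = (g x - g y) / (x - y) :=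
      (hslopeL y hy).liminf_eq
    calc (g x - g y) / (x - y) = liminf (fun j => (f j x - f j y) / (x - y)) atTop := h2.symm
      _ ≤ liminf (fun j => leftSlopeSup (f j) a x) atTop :=
        liminf_le_liminf (Eventually.of_forall h1)
          (hslopeL y hy).isBoundedUnder_ge hL_bdd_le.isCoboundedUnder_ge
  · calc liminf (fun j => leftSlopeSup (f j) a x) atTop
        ≤ liminf (fun j => rightSlopeInf (f j) b x) atTop :=
          liminf_le_liminf (Eventually.of_forall hLR) hL_bdd_ge hR_bdd_le.isCoboundedUnder_ge
      _ ≤ limsup (fun j => rightSlopeInf (f j) b x) atTop :=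
          liminf_le_limsup hR_bdd_le hR_bdd_ge
  · -- limsup ≤ rightSlopeInf g
    refine le_csInf ⟨_, ⟨z₀, hz₀, rfl⟩⟩ ?_
    rintro _ ⟨z, hz, rfl⟩
    have h1 : ∀ j, rightSlopeInf (f j) b x ≤ (f j z - f j x) / (z - x) :=
      fun j => rightSlopeInf_le_right (hconv j) hx hz
    have h2 : limsup (fun j => (f j z - f j x) / (z - x)) atTop = (g z - g x) / (z - x) :=
      (hslopeR z hz).limsup_eq
    calc limsup (fun j => rightSlopeInf (f j) b x) atTop
        ≤ limsup (fun j => (f j z - f j x) / (z - x)) atTop :=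
          limsup_le_limsup (Eventually.of_forall h1) hR_bdd_ge.isCoboundedUnder_le
            (hslopeR z hz).isBoundedUnder_le
      _ = (g z - g x) / (z - x) := h2
end

section
/- Let $V$ be a finite-dimensional complex vector space and let $[0,\infty) \ni s \mapsto H_s$ be a continuous family of positive Hermitian inner products on $V$ such that for each nonzero $v \in V$, the function $s \mapsto \log H_s(v,v)$ is convex in $s$ when applied to the dual family (i.e., the family is positive in the Griffiths sense, meaning $s \mapsto \log H_s^*(w,w)$ is convex for all nonzero $w$ in the dual space $V^*$). Then the function $s \mapsto \log \det H_s$ is concave on $[0,\infty)$. -/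
open Matrix
open scoped ComplexOrder

/-!
Put `M s = (H s)⁻¹`; it suffices that `s ↦ log det M s` is convex. Given `x`, `y` and
`s = a x + b y`, simultaneously diagonalize `M x` and `M y`: for some invertible `S`,
`Sᴴ (M x) S = 1` and `Sᴴ (M y) S = diag d`. The convexity hypothesis, tested on the columns of `S`,
bounds the diagonal entries of `Sᴴ (M s) S` by `d i ^ b`, and Hadamard's inequality
`det P ≤ ∏ i, P i i` turns this into `det M s ≤ (det M x) ^ a * (det M y) ^ b`, because the
congruence by `S` multiplies all three determinants by the same factor `‖det S‖ ^ 2`.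
-/

namespace Matrix

lemma star_dotProduct_conjTranspose_mul_mul_mulVec {R m n : Type*} [Fintype m] [Fintype n]
    [CommSemiring R] [StarRing R] (S : Matrix m n R) (Y : Matrix m m R) (v : n → R) :
    star v ⬝ᵥ (Sᴴ * Y * S) *ᵥ v = star (S *ᵥ v) ⬝ᵥ Y *ᵥ (S *ᵥ v) := by
  rw [← mulVec_mulVec, ← mulVec_mulVec, dotProduct_mulVec, ← star_mulVec]

variable {𝕜 ι : Type*} [RCLike 𝕜] [Fintype ι] [DecidableEq ι]

lemma re_det_conjTranspose_mul_mul (S X : Matrix ι ι 𝕜) :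
    RCLike.re (Sᴴ * X * S).det = ‖S.det‖ ^ 2 * RCLike.re X.det := by
  rw [det_mul, det_mul, det_conjTranspose, mul_right_comm, RCLike.star_def, RCLike.conj_mul,
    ← RCLike.ofReal_pow, RCLike.re_ofReal_mul]

lemma IsHermitian.ofReal_re_det {A : Matrix ι ι 𝕜} (hA : A.IsHermitian) :
    (RCLike.re A.det : 𝕜) = A.det := by
  rw [hA.det_eq_prod_eigenvalues, ← RCLike.ofReal_prod, RCLike.ofReal_re]

namespace PosDef

lemma re_det_pos {A : Matrix ι ι 𝕜} (hA : A.PosDef) : 0 < RCLike.re A.det :=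
  (RCLike.pos_iff.mp hA.det_pos).1

lemma re_det_inv {A : Matrix ι ι 𝕜} (hA : A.PosDef) :
    RCLike.re A⁻¹.det = (RCLike.re A.det)⁻¹ := by
  rw [det_nonsing_inv, Ring.inverse_eq_inv', ← hA.isHermitian.ofReal_re_det, ← RCLike.ofReal_inv,
    RCLike.ofReal_re, RCLike.ofReal_re]

lemma log_re_det_conjTranspose_mul_mul {Y : Matrix ι ι 𝕜} (hY : Y.PosDef) {S : Matrix ι ι 𝕜}
    (hS : IsUnit S) :
    Real.log (RCLike.re (Sᴴ * Y * S).det) =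
      Real.log (‖S.det‖ ^ 2) + Real.log (RCLike.re Y.det) := by
  have hS0 : S.det ≠ 0 := ((isUnit_iff_isUnit_det S).mp hS).ne_zero
  rw [re_det_conjTranspose_mul_mul, Real.log_mul (by positivity) hY.re_det_pos.ne']

lemma log_det_le_trace_sub_card {Q : Matrix ι ι 𝕜} (hQ : Q.PosDef) :
    Real.log (RCLike.re Q.det) ≤ RCLike.re Q.trace - Fintype.card ι := by
  have hev := hQ.eigenvalues_pos
  rw [hQ.isHermitian.det_eq_prod_eigenvalues, hQ.isHermitian.trace_eq_sum_eigenvalues,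
    ← RCLike.ofReal_prod, ← RCLike.ofReal_sum, RCLike.ofReal_re, RCLike.ofReal_re,
    Real.log_prod fun i _ => (hev i).ne', Fintype.card_eq_sum_ones, Nat.cast_sum, Nat.cast_one,
    ← Finset.sum_sub_distrib]
  exact Finset.sum_le_sum fun i _ => Real.log_le_sub_one_of_pos (hev i)

/-- Hadamard's inequality: rescale `P` by a diagonal congruence to unit diagonal, then apply
`log_det_le_trace_sub_card`. -/
lemma log_det_le_sum_log_diag {P : Matrix ι ι 𝕜} (hP : P.PosDef) :
    Real.log (RCLike.re P.det) ≤ ∑ i, Real.log (RCLike.re (P i i)) := by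
  have hdiag (i : ι) : 0 < RCLike.re (P i i) := (RCLike.pos_iff.mp hP.diag_pos).1
  set t : ι → ℝ := fun i => √(RCLike.re (P i i))⁻¹
  have ht (i : ι) : t i ^ 2 = (RCLike.re (P i i))⁻¹ := Real.sq_sqrt (inv_pos.mpr (hdiag i)).le
  have ht0 (i : ι) : t i ≠ 0 := fun h => by simpa [h, (hdiag i).ne'] using (ht i).symm
  set D : Matrix ι ι 𝕜 := diagonal fun i => (t i : 𝕜)
  have hD : D.det = ((∏ i, t i : ℝ) : 𝕜) := by simp [D, det_diagonal]
  have hDunit : IsUnit D := by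
    rw [isUnit_iff_isUnit_det, hD, isUnit_iff_ne_zero, RCLike.ofReal_ne_zero]
    exact Finset.prod_ne_zero_iff.mpr fun i _ => ht0 i
  have htrace : RCLike.re (Dᴴ * P * D).trace = Fintype.card ι := by
    have (i : ι) : RCLike.re ((Dᴴ * P * D) i i) = 1 := by
      simp only [D, diagonal_conjTranspose, mul_diagonal, diagonal_mul, Pi.star_apply,
        RCLike.star_def, RCLike.conj_ofReal, RCLike.mul_re, RCLike.ofReal_re, RCLike.ofReal_im,
        RCLike.mul_im, zero_mul, mul_zero, sub_zero, add_zero]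
      rw [mul_right_comm, ← sq, ht, inv_mul_cancel₀ (hdiag i).ne']
    simp [trace, this]
  have hlogD : Real.log (‖D.det‖ ^ 2) = -∑ i, Real.log (RCLike.re (P i i)) := by
    rw [hD, RCLike.norm_ofReal, sq_abs, ← Finset.prod_pow,
      Real.log_prod fun i _ => pow_ne_zero 2 (ht0 i), ← Finset.sum_neg_distrib]
    simp only [ht, Real.log_inv]
  have hlog :=
    (hP.conjTranspose_mul_mul_same (mulVec_injective_iff_isUnit.mpr hDunit)).log_det_le_trace_sub_card
  rw [log_re_det_conjTranspose_mul_mul hP hDunit, hlogD, htrace] at hlog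
  linarith

open scoped MatrixOrder in
lemma exists_conjTranspose_mul_mul_eq_one {A : Matrix ι ι 𝕜} (hA : A.PosDef) :
    ∃ R : Matrix ι ι 𝕜, IsUnit R ∧ Rᴴ * A * R = 1 := by
  obtain ⟨T, hTH, hT, rfl⟩ : ∃ T : Matrix ι ι 𝕜, Tᴴ = T ∧ IsUnit T ∧ T * T = A :=
    ⟨CFC.sqrt A, (CFC.sqrt_nonneg A).posSemidef.isHermitian.eq,
      (CFC.isUnit_sqrt_iff A hA.posSemidef.nonneg).mpr hA.isUnit,
      CFC.sqrt_mul_sqrt_self A hA.posSemidef.nonneg⟩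
  have hTdet : IsUnit T.det := (isUnit_iff_isUnit_det T).mp hT
  refine ⟨T⁻¹, isUnit_nonsing_inv_iff.mpr hT, ?_⟩
  rw [conjTranspose_nonsing_inv, hTH]
  calc T⁻¹ * (T * T) * T⁻¹ = (T⁻¹ * T) * (T * T⁻¹) := by noncomm_ring
    _ = 1 := by rw [nonsing_inv_mul _ hTdet, mul_nonsing_inv _ hTdet, one_mul]

lemma exists_conjTranspose_mul_mul_eq_one_and_diagonal {A B : Matrix ι ι 𝕜} (hA : A.PosDef)
    (hB : B.IsHermitian) :
    ∃ (S : Matrix ι ι 𝕜) (d : ι → ℝ),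
      IsUnit S ∧ Sᴴ * A * S = 1 ∧ Sᴴ * B * S = diagonal (RCLike.ofReal ∘ d) := by
  obtain ⟨R, hR, hRAR⟩ := hA.exists_conjTranspose_mul_mul_eq_one
  have hC : (Rᴴ * B * R).IsHermitian := isHermitian_conjTranspose_mul_mul R hB
  obtain ⟨U, d, hU, hUCU⟩ : ∃ (U : Matrix ι ι 𝕜) (d : ι → ℝ), U ∈ unitaryGroup ι 𝕜 ∧
      star U * (Rᴴ * B * R) * U = diagonal (RCLike.ofReal ∘ d) :=
    ⟨hC.eigenvectorUnitary, hC.eigenvalues, hC.eigenvectorUnitary.2,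
      (Unitary.conjStarAlgAut_star_apply ..).symm.trans hC.conjStarAlgAut_star_eigenvectorUnitary⟩
  have hS : (R * U)ᴴ = star U * Rᴴ := conjTranspose_mul ..
  refine ⟨R * U, d, hR.mul (Unitary.isUnit_coe (U := ⟨U, hU⟩)), ?_, ?_⟩
  · calc (R * U)ᴴ * A * (R * U) = star U * (Rᴴ * A * R) * U := by rw [hS]; noncomm_ring
      _ = 1 := by rw [hRAR, mul_one, Unitary.star_mul_self_of_mem hU]
  · rw [← hUCU, hS]
    noncomm_ring

lemma log_det_le_of_log_dotProduct_mulVec_le {X A B : Matrix ι ι 𝕜} (hX : X.PosDef)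
    (hA : A.PosDef) (hB : B.PosDef) {a b : ℝ} (hab : a + b = 1)
    (h : ∀ w : ι → 𝕜, w ≠ 0 → Real.log (RCLike.re (star w ⬝ᵥ X *ᵥ w)) ≤
      a * Real.log (RCLike.re (star w ⬝ᵥ A *ᵥ w)) +
        b * Real.log (RCLike.re (star w ⬝ᵥ B *ᵥ w))) :
    Real.log (RCLike.re X.det) ≤
      a * Real.log (RCLike.re A.det) + b * Real.log (RCLike.re B.det) := by
  obtain ⟨S, d, hS, hSA, hSB⟩ :=
    hA.exists_conjTranspose_mul_mul_eq_one_and_diagonal hB.isHermitian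
  have hSinj : Function.Injective S.mulVec := mulVec_injective_iff_isUnit.mpr hS
  have hd (i : ι) : 0 < d i := by
    simpa [hSB] using
      (RCLike.pos_iff.mp ((hB.conjTranspose_mul_mul_same hSinj).diag_pos (i := i))).1
  have hdiag (i : ι) : Real.log (RCLike.re ((Sᴴ * X * S) i i)) ≤ b * Real.log (d i) := by
    set w := S *ᵥ Pi.single i 1
    have hw (Y : Matrix ι ι 𝕜) : star w ⬝ᵥ Y *ᵥ w = (Sᴴ * Y * S) i i := by
      rw [← star_dotProduct_conjTranspose_mul_mul_mulVec]
      simp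
    have hw0 : w ≠ 0 := fun h0 => by simpa using hSinj (h0.trans (mulVec_zero S).symm)
    simpa [hw, hSA, hSB] using h w hw0
  have hHadamard := (hX.conjTranspose_mul_mul_same hSinj).log_det_le_sum_log_diag.trans
    (Finset.sum_le_sum fun i _ => hdiag i)
  rw [log_re_det_conjTranspose_mul_mul hX hS, ← Finset.mul_sum] at hHadamard
  have hlogA := log_re_det_conjTranspose_mul_mul hA hS
  have hlogB := log_re_det_conjTranspose_mul_mul hB hS
  rw [hSA, det_one, RCLike.one_re, Real.log_one] at hlogA
  simp only [hSB, det_diagonal, Function.comp_apply, ← RCLike.ofReal_prod,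
    RCLike.ofReal_re] at hlogB
  rw [Real.log_prod fun i _ => (hd i).ne'] at hlogB
  linear_combination hHadamard + b * hlogB + a * hlogA + Real.log (‖S.det‖ ^ 2) * hab

end PosDef

theorem convexOn_log_det_of_convexOn_log_dotProduct_mulVec {E : Type*} [AddCommMonoid E]
    [Module ℝ E] {s : Set E} (hs : Convex ℝ s) {M : E → Matrix ι ι 𝕜}
    (hM : ∀ x ∈ s, (M x).PosDef)
    (h : ∀ w : ι → 𝕜, w ≠ 0 → ConvexOn ℝ s fun x => Real.log (RCLike.re (star w ⬝ᵥ M x *ᵥ w))) :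
    ConvexOn ℝ s fun x => Real.log (RCLike.re (M x).det) :=
  ⟨hs, fun x hx y hy _ _ ha hb hab =>
    (hM _ (hs hx hy ha hb hab)).log_det_le_of_log_dotProduct_mulVec_le (hM x hx) (hM y hy) hab
      fun w hw => (h w hw).2 hx hy ha hb hab⟩

end Matrix

theorem stmt3_general (N : ℕ) (H : ℝ → Matrix (Fin N) (Fin N) ℂ)
    (hPD : ∀ s ∈ Set.Ici (0:ℝ), (H s).PosDef)
    (hdual : ∀ w : Fin N → ℂ, w ≠ 0 →
      ConvexOn ℝ (Set.Ici 0) (fun s => Real.log (star w ⬝ᵥ (H s)⁻¹.mulVec w).re)) :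
    ConcaveOn ℝ (Set.Ici 0) (fun s => Real.log (H s).det.re) := by
  have hconv := Matrix.convexOn_log_det_of_convexOn_log_dotProduct_mulVec (convex_Ici 0)
    (fun s hs => (hPD s hs).inv) hdual
  refine hconv.neg.congr fun s hs => ?_
  rw [Pi.neg_apply, (hPD s hs).re_det_inv, Real.log_inv, neg_neg, RCLike.re_to_complex]

/-- If `s ↦ H s` is a continuous family of positive definite Hermitian matrices on `[0,∞)`
(representing Hermitian inner products on a finite-dimensional complex vector space) which is
positive in the Griffiths sense, i.e. the dual family is Griffiths negative, meaning
`s ↦ log H*_s(w,w) = log (w* (H s)⁻¹ w)` is convex for every nonzero `w`, then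
`s ↦ log det H_s` is concave on `[0,∞)`. -/
theorem stmt3 (N : ℕ) (H : ℝ → Matrix (Fin N) (Fin N) ℂ)
    (hcont : Continuous H)
    (hHerm : ∀ s ∈ Set.Ici (0:ℝ), (H s).IsHermitian)
    (hPD : ∀ s ∈ Set.Ici (0:ℝ), (H s).PosDef)
    (hdual : ∀ w : Fin N → ℂ, w ≠ 0 →
      ConvexOn ℝ (Set.Ici 0) (fun s => Real.log (star w ⬝ᵥ (H s)⁻¹.mulVec w).re)) :
    ConcaveOn ℝ (Set.Ici 0) (fun s => Real.log (H s).det.re) :=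
  stmt3_general N H hPD hdual
end

section
/- Let $\{\varphi_j\}_j$ and $\varphi$ in $\mathrm{PSH}(X,\omega)$ be model potentials ($P[\varphi_j]=\varphi_j$, $P[\varphi]=\varphi$), all bounded above by 0. If $\varphi_j \searrow \varphi$ pointwise and each $\varphi_j$ is $\mathcal{I}$-model (i.e., $P_{\mathcal{I}}[\varphi_j] = \varphi_j$), then $\varphi$ is $\mathcal{I}$-model as well. -/
open Filter Topology

/-- Lemma 2.19(i) of the paper (abstract form): a decreasing limit of `𝓘`-model potentials
which is a model potential is itself `𝓘`-model. Here `P` is the envelope of singularity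
type, `PI` is the `𝓘`-envelope `P_𝓘[·]`, and `preceq` is the preorder
`φ ⪯_𝓘 ψ ⟺ 𝓘(aφ) ⊆ 𝓘(aψ)` for all `a > 0`, with its standard properties listed. -/
theorem stmt14 {X : Type*} [TopologicalSpace X] [CompactSpace X]
    (PSH : (X → EReal) → Prop)
    (P PI : (X → EReal) → (X → EReal))
    (preceq : (X → EReal) → (X → EReal) → Prop)
    (hpre_mono : ∀ u v : X → EReal, (∀ x, u x ≤ v x) → preceq u v)
    (hpre_trans : ∀ u v w : X → EReal, preceq u v → preceq v w → preceq u w)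
    (hPI_equiv : ∀ u : X → EReal, preceq u (PI u) ∧ preceq (PI u) u)
    (hPI_mono : ∀ u v : X → EReal, preceq u v → ∀ x, PI u x ≤ PI v x)
    (hPI_ge : ∀ u : X → EReal, (∀ x, u x ≤ 0) → ∀ x, u x ≤ PI u x)
    (φ : ℕ → X → EReal) (ψ : X → EReal)
    (hpshj : ∀ j, PSH (φ j)) (hpsh : PSH ψ)
    (hneg : ∀ j x, φ j x ≤ 0) (hnegψ : ∀ x, ψ x ≤ 0)
    (hmodelj : ∀ j, P (φ j) = φ j) (hmodel : P ψ = ψ)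
    (hImodelj : ∀ j, PI (φ j) = φ j)
    (hdecj : ∀ j x, φ (j+1) x ≤ φ j x)
    (hlim : ∀ x, Tendsto (fun j => φ j x) atTop (𝓝 (ψ x))) :
    PI ψ = ψ := by
  have hanti : ∀ x j k, j ≤ k → φ k x ≤ φ j x := by
    intro x j k hjk
    induction k with
    | zero => simpa [Nat.le_zero.mp hjk]
    | succ n ih =>
      rcases Nat.lt_or_ge j (n+1) with h | h
      · exact le_trans (hdecj n x) (ih (Nat.lt_succ_iff.mp h))
      · simp [Nat.le_antisymm hjk h]
  have hle : ∀ j x, ψ x ≤ φ j x := by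
    intro j x
    refine le_of_tendsto (hlim x) ?_
    filter_upwards [eventually_ge_atTop j] with k hk
    exact hanti x j k hk
  funext x
  refine le_antisymm ?_ (hPI_ge ψ hnegψ x)
  have hub : ∀ j, PI ψ x ≤ φ j x := by
    intro j
    have := hPI_mono ψ (φ j) (hpre_mono _ _ (hle j)) x
    rwa [hImodelj j] at this
  exact ge_of_tendsto (hlim x) (Eventually.of_forall hub)
end
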